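/- Let A be a unital C*-algebra and let u, v ∈ A be extremal partial isometries with ‖u − v‖ < 2. Then u and v have the same defect ideals: the closed two-sided ideal of A generated by 1 − uu* equals the closed two-sided ideal generated by 1 − vv*, and the closed two-sided ideal generated by 1 − u*u equals the closed two-sided ideal generated by 1 − v*v. -/

import Mathlib

/-!
Let `K` be the closed ideal generated by `1 - v v*` and `1 - u* u`. Modulo `K`, `u` is an isometry
and `v` a co-isometry, so `v* u` is a right inverse of `a = 1 - u* (u - v)`; as
`‖1 - a‖ ≤ ‖u - v‖ < 2`, a Neumann series argument makes `a` invertible modulo `K`, whence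
`v* u u* v ≡ 1`. Closed ideals being hereditary, `v* (1 - u u*) v ∈ K`, and then `1 - u u* ∈ K`.
Kadison's condition `(1 - u u*) A (1 - u* u) = 0` says that left multiplication by the projection
`1 - u u*` maps `K` into the closed ideal generated by `1 - v v*`, which therefore contains
`1 - u u*`. Exchanging `u` and `v`, and passing to adjoints, gives both equalities.
-/

/-- An element `u` of a C*-algebra is a partial isometry if `u * u* * u = u`. -/
def IsPartialIsometry {A : Type*} [CStarAlgebra A] (u : A) : Prop :=
  u * star u * u = u

/-- A partial isometry in a unital C*-algebra is extremal if it is an extreme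
point of the closed unit ball. -/
def IsExtremalPartialIsometry {A : Type*} [CStarAlgebra A] (u : A) : Prop :=
  IsPartialIsometry u ∧ u ∈ Set.extremePoints ℝ (Metric.closedBall (0 : A) 1)

/-- The closed two-sided ideal of `A` generated by an element `a`, as a set. -/
def closedIdealGen {A : Type*} [CStarAlgebra A] (a : A) : Set A :=
  closure (TwoSidedIdeal.span {a} : Set A)

namespace TwoSidedIdeal

section Ring

variable {R : Type*} [Ring R]

lemma mem_iff_ringCon_mk'_eq_zero {K : TwoSidedIdeal R} {x : R} :
    x ∈ K ↔ K.ringCon.mk' x = 0 := by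
  rw [← mem_ker, ker_ringCon_mk']

lemma mul_mem_span_singleton_of_mem_span_pair {p g q x : R} (hpq : ∀ a, p * a * q = 0)
    (hx : x ∈ span {g, q}) : p * x ∈ span {g} := by
  suffices ∀ a, p * a * x ∈ span {g} by simpa using this 1
  induction hx using span_induction with
  | mem y hy =>
    rcases hy with rfl | rfl
    · exact fun a ↦ mul_mem_left _ _ _ (subset_span rfl)
    · exact fun a ↦ by simp [hpq]
  | zero => simp
  | add y z _ _ hy hz => exact fun a ↦ by simpa [mul_add] using add_mem _ (hy a) (hz a)
  | neg y _ hy => exact fun a ↦ by simpa using neg_mem _ (hy a)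
  | left_absorb b y _ hy => exact fun a ↦ by simpa [mul_assoc] using hy (a * b)
  | right_absorb b y _ hy => exact fun a ↦ by simpa [mul_assoc] using mul_mem_right _ _ b (hy a)

end Ring

section TopologicalRing

variable {R : Type*} [Ring R] [TopologicalSpace R] [IsTopologicalRing R]

def topologicalClosure (I : TwoSidedIdeal R) : TwoSidedIdeal R :=
  .mk' (closure I) (subset_closure I.zero_mem)
    (fun hx hy ↦ map_mem_closure₂ continuous_add hx hy fun _ ha _ hb ↦ I.add_mem ha hb)
    (fun hx ↦ map_mem_closure continuous_neg hx fun _ ha ↦ I.neg_mem ha)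
    (fun {x _} hy ↦ map_mem_closure (continuous_const_mul x) hy fun _ ha ↦ I.mul_mem_left x _ ha)
    (fun {_ y} hx ↦ map_mem_closure (f := (· * y)) (continuous_mul_const y) hx
      fun _ ha ↦ I.mul_mem_right _ y ha)

lemma mem_topologicalClosure {I : TwoSidedIdeal R} {x : R} :
    x ∈ I.topologicalClosure ↔ x ∈ closure (I : Set R) := by
  unfold topologicalClosure
  exact mem_mk' ..

@[simp]
lemma coe_topologicalClosure (I : TwoSidedIdeal R) :
    (I.topologicalClosure : Set R) = closure I :=
  Set.ext fun _ ↦ mem_topologicalClosure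

lemma isClosed_topologicalClosure (I : TwoSidedIdeal R) :
    IsClosed (I.topologicalClosure : Set R) := by
  simp [isClosed_closure]

lemma le_topologicalClosure (I : TwoSidedIdeal R) : I ≤ I.topologicalClosure := fun _ hx ↦
  mem_topologicalClosure.2 (subset_closure hx)

lemma topologicalClosure_le {I J : TwoSidedIdeal R} (hIJ : I ≤ J) (hJ : IsClosed (J : Set R)) :
    I.topologicalClosure ≤ J := fun _ hx ↦
  closure_minimal (fun _ hy ↦ hIJ hy) hJ (mem_topologicalClosure.1 hx)

lemma mem_topologicalClosure_span_singleton_of_mem_span_pair {p g q : R}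
    (hp : IsIdempotentElem p) (hpq : ∀ a, p * a * q = 0)
    (h : p ∈ (span {g, q}).topologicalClosure) : p ∈ (span {g}).topologicalClosure := by
  rw [mem_topologicalClosure] at h ⊢
  simpa [hp.eq] using map_mem_closure (continuous_const_mul p) h
    fun _ hx ↦ mul_mem_span_singleton_of_mem_span_pair hpq hx

end TopologicalRing

end TwoSidedIdeal

lemma closedIdealGen_subset_of_mem {A : Type*} [CStarAlgebra A] {a b : A}
    (h : a ∈ closedIdealGen b) : closedIdealGen a ⊆ closedIdealGen b := by
  simp only [closedIdealGen, ← TwoSidedIdeal.coe_topologicalClosure, SetLike.mem_coe] at h ⊢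
  exact TwoSidedIdeal.topologicalClosure_le
    (TwoSidedIdeal.span_le.2 (Set.singleton_subset_iff.2 h))
    (TwoSidedIdeal.isClosed_topologicalClosure _)

section Order

variable {A : Type*} [CStarAlgebra A] [PartialOrder A] [StarOrderedRing A]

lemma norm_le_one_of_star_mul_self_le_one {w : A} (h : star w * w ≤ 1) : ‖w‖ ≤ 1 := by
  have := (CStarAlgebra.norm_le_one_iff_of_nonneg (star w * w)).2 h
  rw [CStarRing.norm_star_mul_self] at this
  nlinarith [norm_nonneg w]

lemma star_mul_self_le_one_of_norm_le_one {w : A} (h : ‖w‖ ≤ 1) : star w * w ≤ 1 := by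
  rw [← CStarAlgebra.norm_le_one_iff_of_nonneg (star w * w), CStarRing.norm_star_mul_self]
  nlinarith [norm_nonneg w]

end Order

namespace IsPartialIsometry

variable {A : Type*} [CStarAlgebra A] {u : A}

protected lemma star (hu : IsPartialIsometry u) : IsPartialIsometry (star u) := by
  simpa [IsPartialIsometry, mul_assoc] using congr(star $hu)

lemma isStarProjection_star_mul (hu : IsPartialIsometry u) : IsStarProjection (star u * u) where
  isIdempotentElem := by
    rw [IsIdempotentElem, ← mul_assoc, mul_assoc (star u) u, mul_assoc (star u), hu]
  isSelfAdjoint := .star_mul_self u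

lemma isStarProjection_mul_star (hu : IsPartialIsometry u) : IsStarProjection (u * star u) := by
  simpa using hu.star.isStarProjection_star_mul

lemma mul_one_sub_star_mul (hu : IsPartialIsometry u) : u * (1 - star u * u) = 0 := by
  rw [mul_sub, mul_one, ← mul_assoc, hu, sub_self]

lemma star_mul_one_sub_mul_star (hu : IsPartialIsometry u) : star u * (1 - u * star u) = 0 := by
  simpa using hu.star.mul_one_sub_star_mul

lemma norm_le_one (hu : IsPartialIsometry u) : ‖u‖ ≤ 1 := by
  have := hu.isStarProjection_star_mul.norm_le
  rw [CStarRing.norm_star_mul_self] at this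
  nlinarith [norm_nonneg u]

/-- `(u + z)* (u + z) = u* u + z* z`, and `z* z ≤ 1` lies in the corner cut out by `1 - u* u`. -/
lemma norm_add_le_one (hu : IsPartialIsometry u) {z : A} (hz : ‖z‖ ≤ 1)
    (hzu : star u * z = 0) (hzq : z * (star u * u) = 0) : ‖u + z‖ ≤ 1 := by
  let _ : PartialOrder A := CStarAlgebra.spectralOrder A
  have _ : StarOrderedRing A := CStarAlgebra.spectralOrderedRing A
  set s := star u * u
  have hs : IsStarProjection s := hu.isStarProjection_star_mul
  have huz : star z * u = 0 := by simpa using congr(star $hzu)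
  have hzs : star z * z = (1 - s) * (star z * z) * (1 - s) := by
    have hz' : z * (1 - s) = z := by rw [mul_sub, mul_one, hzq, sub_zero]
    calc star z * z = star (z * (1 - s)) * (z * (1 - s)) := by rw [hz']
      _ = _ := by simp only [star_mul, hs.one_sub.isSelfAdjoint.star_eq, mul_assoc]
  apply norm_le_one_of_star_mul_self_le_one
  calc star (u + z) * (u + z) = s + (1 - s) * (star z * z) * (1 - s) := by
        rw [← hzs, star_add, add_mul, mul_add, mul_add, hzu, huz]; abel
    _ ≤ s + (1 - s) * 1 * (1 - s) := by
        gcongr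
        exact hs.one_sub.isSelfAdjoint.conjugate_le_conjugate
          (star_mul_self_le_one_of_norm_le_one hz)
    _ = 1 := by rw [mul_one, hs.one_sub.isIdempotentElem.eq, add_sub_cancel]

end IsPartialIsometry

namespace IsExtremalPartialIsometry

variable {A : Type*} [CStarAlgebra A] {u : A}

protected lemma star (hu : IsExtremalPartialIsometry u) : IsExtremalPartialIsometry (star u) := by
  refine ⟨hu.1.star, ?_⟩
  have hball : ∀ x : A, star x ∈ Metric.closedBall (0 : A) 1 ↔ x ∈ Metric.closedBall (0 : A) 1 :=
    fun x ↦ by simp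
  refine ⟨(hball u).2 hu.2.1, fun x₁ hx₁ x₂ hx₂ hseg ↦ ?_⟩
  have hseg' : u ∈ openSegment ℝ (star x₁) (star x₂) := by
    obtain ⟨a, b, ha, hb, hab, h⟩ := hseg
    exact ⟨a, b, ha, hb, hab, by simpa [star_smul] using congr(star $h)⟩
  simpa using congr(star $(hu.2.2 ((hball x₁).2 hx₁) ((hball x₂).2 hx₂) hseg'))

/-- A nonzero `w` in the corner, scaled to norm `≤ 1`, would exhibit `u` as the midpoint of
`u - w` and `u + w`, both in the unit ball by `norm_add_le_one`. -/
lemma one_sub_mul_star_mul_mul_one_sub_star_mul (hu : IsExtremalPartialIsometry u) (a : A) :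
    (1 - u * star u) * a * (1 - star u * u) = 0 := by
  set z := (1 - u * star u) * a * (1 - star u * u)
  set w := (1 + ‖z‖)⁻¹ • z
  have hw : ‖w‖ ≤ 1 := by
    rw [norm_smul, norm_inv, Real.norm_of_nonneg (by positivity), inv_mul_le_one₀ (by positivity)]
    linarith
  have hwu : star u * w = 0 := by
    simp [w, z, ← mul_assoc, hu.1.star_mul_one_sub_mul_star]
  have hwq : w * (star u * u) = 0 := by
    simp [w, z, mul_assoc, hu.1.isStarProjection_star_mul.one_sub_mul_self]
  have hball : ∀ y : A, ‖y‖ ≤ 1 → y ∈ Metric.closedBall (0 : A) 1 := by simp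
  have hsub : u - w ∈ Metric.closedBall (0 : A) 1 := hball _ <| by
    rw [sub_eq_add_neg]
    exact hu.1.norm_add_le_one (by rwa [norm_neg]) (by simp [hwu]) (by simp [hwq])
  have hadd : u + w ∈ Metric.closedBall (0 : A) 1 := hball _ (hu.1.norm_add_le_one hw hwu hwq)
  have hmid : u ∈ openSegment ℝ (u - w) (u + w) :=
    ⟨1 / 2, 1 / 2, by norm_num, by norm_num, by norm_num, by module⟩
  have hw0 : w = 0 := by simpa using hu.2.2 hsub hadd hmid
  simpa [w, (by positivity : (1 + ‖z‖)⁻¹ ≠ 0)] using hw0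

end IsExtremalPartialIsometry

lemma ringInverse_algebraMap {𝕜 R : Type*} [Field 𝕜] [Ring R] [Algebra 𝕜 R] {r : 𝕜}
    (hr : r ≠ 0) : Ring.inverse (algebraMap 𝕜 R r) = algebraMap 𝕜 R r⁻¹ := by
  have hunit : IsUnit (algebraMap 𝕜 R r) := (isUnit_iff_ne_zero.2 hr).map _
  simpa using (Ring.inverse_mul_eq_iff_eq_mul _ 1 _ hunit).2
    (by rw [← map_mul, mul_inv_cancel₀ hr, map_one])

section Hereditary

open Filter Topology

variable {A : Type*} [CStarAlgebra A] [PartialOrder A] [StarOrderedRing A]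

/-- With `y = (ε² + c)⁻¹` one has `b - b y c = ε² b y`, and `‖√b y‖² = ‖y b y‖ ≤ ‖y (ε² + c) y‖`
is at most `ε⁻²`. -/
lemma norm_sub_mul_ringInverse_mul_le {b c : A} (hb : 0 ≤ b) (hbc : b ≤ c) {ε : ℝ}
    (hε : 0 < ε) :
    ‖b - b * Ring.inverse (algebraMap ℝ A (ε ^ 2) + c) * c‖ ≤ ε * ‖CFC.sqrt b‖ := by
  set d := algebraMap ℝ A (ε ^ 2) with hd_def
  set y := Ring.inverse (d + c)
  have hd : IsStrictlyPositive d := isStrictlyPositive_algebraMap (by positivity)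
  have hpos : IsStrictlyPositive (d + c) := hd.add_nonneg (hb.trans hbc)
  have hy : y * (d + c) = 1 := Ring.inverse_mul_cancel _ hpos.isUnit
  have hy_sa : IsSelfAdjoint y := hpos.ringInverse.isSelfAdjoint
  have hy_norm : ‖y‖ ≤ (ε ^ 2)⁻¹ := by
    rw [CStarAlgebra.norm_le_iff_le_algebraMap y (by positivity) hpos.ringInverse.nonneg,
      ← ringInverse_algebraMap (by positivity)]
    exact CStarAlgebra.ringInverse_le_ringInverse (le_add_of_nonneg_right (hb.trans hbc)) hd
  have hxy : ‖CFC.sqrt b * y‖ ≤ ε⁻¹ := by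
    refine (pow_le_pow_iff_left₀ (norm_nonneg _) (by positivity) two_ne_zero).1 ?_
    calc ‖CFC.sqrt b * y‖ ^ 2 = ‖y * (CFC.sqrt b * CFC.sqrt b) * y‖ := by
          rw [sq, ← CStarRing.norm_star_mul_self, star_mul, hy_sa.star_eq,
            (CFC.sqrt_nonneg b).isSelfAdjoint.star_eq]
          simp only [mul_assoc]
      _ ≤ ‖y * (d + c) * y‖ := by
          rw [CFC.sqrt_mul_sqrt_self b hb]
          exact CStarAlgebra.norm_le_norm_of_nonneg_of_le (hy_sa.conjugate_nonneg hb)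
            (hy_sa.conjugate_le_conjugate (hbc.trans (le_add_of_nonneg_left hd.nonneg)))
      _ = ‖y‖ := by rw [hy, one_mul]
      _ ≤ ε⁻¹ ^ 2 := by rwa [inv_pow]
  have hdiff : b - b * y * c = ε ^ 2 • (b * y) := by
    have hyc : y * c = 1 - ε ^ 2 • y := by
      rw [eq_sub_iff_add_eq, ← hy, mul_add, add_comm, hd_def, Algebra.algebraMap_eq_smul_one,
        mul_smul_one]
    rw [mul_assoc, hyc, mul_sub, mul_one, mul_smul_comm, sub_sub_cancel]
  calc ‖b - b * y * c‖ = ε ^ 2 * ‖CFC.sqrt b * (CFC.sqrt b * y)‖ := by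
        rw [hdiff, norm_smul, ← mul_assoc, CFC.sqrt_mul_sqrt_self b hb,
          Real.norm_of_nonneg (by positivity)]
    _ ≤ ε ^ 2 * (‖CFC.sqrt b‖ * ε⁻¹) := by
        gcongr
        exact (norm_mul_le _ _).trans (by gcongr)
    _ = ε * ‖CFC.sqrt b‖ := by field_simp

lemma TwoSidedIdeal.mem_of_nonneg_of_le {K : TwoSidedIdeal A} (hK : IsClosed (K : Set A))
    {b c : A} (hb : 0 ≤ b) (hbc : b ≤ c) (hc : c ∈ K) : b ∈ K := by
  have hlim : Tendsto (fun ε : ℝ ↦ b * Ring.inverse (algebraMap ℝ A (ε ^ 2) + c) * c)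
      (𝓝[>] 0) (𝓝 b) := by
    rw [tendsto_iff_norm_sub_tendsto_zero]
    refine squeeze_zero_norm' (a := fun ε ↦ ε * ‖CFC.sqrt b‖) ?_ ?_
    · filter_upwards [self_mem_nhdsWithin] with ε hε
      rw [norm_norm, norm_sub_rev]
      exact norm_sub_mul_ringInverse_mul_le hb hbc hε
    · simpa using ((tendsto_id (x := 𝓝 (0 : ℝ))).mul_const ‖CFC.sqrt b‖).mono_left
        nhdsWithin_le_nhds
  exact hK.mem_of_tendsto hlim (Eventually.of_forall fun _ ↦ K.mul_mem_left _ _ hc)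

end Hereditary

/-- With `t = ‖1 - a‖ / 2 < 1`, both `a + t = (1 + t) - (1 - a)` and `1 + b t` are invertible by
a Neumann series, and `φ a * φ (1 + b t) = φ (a + t)`. -/
lemma isUnit_map_of_mul_map_eq_one_of_norm_one_sub_lt_two {A B : Type*} [NormedRing A]
    [NormedAlgebra ℝ A] [NormOneClass A] [CompleteSpace A] [Ring B] (φ : A →+* B) {a b : A}
    (hb : ‖b‖ ≤ 1) (hab : φ a * φ b = 1) (ha : ‖1 - a‖ < 2) : IsUnit (φ a) := by
  set t := ‖1 - a‖ / 2 with ht_def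
  have ht : 0 ≤ t := by positivity
  have h₁ : IsUnit (algebraMap ℝ A (1 + t) - (1 - a)) :=
    spectrum.mem_resolventSet_iff.1 <| spectrum.mem_resolventSet_of_norm_lt <| by
      rw [Real.norm_of_nonneg (by positivity)]
      linarith [ht_def]
  have h₂ : IsUnit (1 + b * algebraMap ℝ A t) := by
    simpa using isUnit_one_sub_of_norm_lt_one (x := -(b * algebraMap ℝ A t)) <| by
      rw [norm_neg]
      calc ‖b * algebraMap ℝ A t‖ ≤ 1 * t := by
            refine (norm_mul_le _ _).trans ?_
            rw [norm_algebraMap', Real.norm_of_nonneg ht]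
            gcongr
        _ < 1 := by linarith [ht_def]
  have key : φ a * φ (1 + b * algebraMap ℝ A t) = φ (algebraMap ℝ A (1 + t) - (1 - a)) := by
    rw [map_add, map_one, map_mul, mul_add, mul_one, ← mul_assoc, hab, one_mul, ← map_add]
    congr 1
    rw [map_add, map_one]
    abel
  exact (Units.isUnit_mul_units (φ a) (h₂.map φ).unit).1 (key ▸ h₁.map φ)

namespace IsPartialIsometry

variable {A : Type*} [CStarAlgebra A] {u v : A}

/-- Modulo `K`, `b = v* u` is a right inverse of `a = 1 - u* (u - v)`, and `b a = v* (u u*) v`. -/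
lemma one_sub_star_mul_mul_star_mul_mem (hu : IsPartialIsometry u) (hv : ‖v‖ ≤ 1)
    (hd : ‖u - v‖ < 2) {K : TwoSidedIdeal A} (hvK : 1 - v * star v ∈ K)
    (huK : 1 - star u * u ∈ K) : 1 - star v * (u * star u) * v ∈ K := by
  nontriviality A
  set φ := K.ringCon.mk'
  set a := 1 - star u * (u - v)
  set b := star v * u
  have hab : φ a * φ b = 1 := by
    rw [← map_mul, eq_comm, ← sub_eq_zero, ← map_one φ, ← map_sub,
      ← TwoSidedIdeal.mem_iff_ringCon_mk'_eq_zero]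
    have : 1 - a * b = (1 - star u * u) * (1 - star v * u) + star u * (1 - v * star v) * u := by
      simp only [a, b]
      noncomm_ring
    rw [this]
    exact K.add_mem (K.mul_mem_right _ _ huK) (K.mul_mem_right _ _ (K.mul_mem_left _ _ hvK))
  have hb : ‖b‖ ≤ 1 := by
    simpa using (norm_mul_le _ _).trans (mul_le_one₀ (by rwa [norm_star]) (norm_nonneg _)
      hu.norm_le_one)
  have ha : ‖1 - a‖ < 2 := by
    refine lt_of_le_of_lt ?_ hd
    simpa [a] using (norm_mul_le _ _).trans
      (mul_le_of_le_one_left (norm_nonneg _) (by simpa using hu.norm_le_one))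
  obtain ⟨w, hw⟩ := isUnit_map_of_mul_map_eq_one_of_norm_one_sub_lt_two φ hb hab ha
  have hba : φ b * φ a = 1 := by
    rw [← hw, Units.mul_eq_one_iff_inv_eq] at hab
    rw [← hw, ← hab, Units.inv_mul]
  have : b * a = star v * (u * star u) * v := by
    calc b * a = star v * (u - u * star u * u) + star v * (u * star u) * v := by
          simp only [a, b]
          noncomm_ring
      _ = _ := by rw [hu, sub_self, mul_zero, zero_add]
  rw [TwoSidedIdeal.mem_iff_ringCon_mk'_eq_zero, ← this, map_sub, map_one, map_mul, hba, sub_self]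

/-- Write `p = 1 - u u*` as `p (1 - v v*) p + c` with `c = p v v* p`; modulo `K` the first term
vanishes and `c² = (p v) (v* p v) (v* p)` does too, while `p` is idempotent. -/
lemma one_sub_mul_star_mem (hu : IsPartialIsometry u) (hv : IsPartialIsometry v)
    {K : TwoSidedIdeal A} (hK : IsClosed (K : Set A)) (hvK : 1 - v * star v ∈ K)
    (huvK : 1 - star v * (u * star u) * v ∈ K) : 1 - u * star u ∈ K := by
  let _ : PartialOrder A := CStarAlgebra.spectralOrder A
  have _ : StarOrderedRing A := CStarAlgebra.spectralOrderedRing A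
  set p := 1 - u * star u
  have hp : IsStarProjection p := hu.isStarProjection_mul_star.one_sub
  have hvpv : star v * p * v ∈ K := by
    refine TwoSidedIdeal.mem_of_nonneg_of_le hK (star_left_conjugate_nonneg hp.nonneg v) ?_ huvK
    rw [← sub_nonneg]
    convert hv.isStarProjection_star_mul.one_sub_nonneg using 1
    simp only [p]
    noncomm_ring
  set c := p * v * star v * p
  have hpc : p - c ∈ K := by
    have : p - c = p * (1 - v * star v) * p := by
      simp only [c, mul_sub, sub_mul, mul_one, hp.isIdempotentElem.eq, mul_assoc]
    rw [this]
    exact K.mul_mem_right _ _ (K.mul_mem_left _ _ hvK)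
  have hcc : c * c ∈ K := by
    have : c * c = p * v * (star v * p * v) * star v * p := by
      rw [show c * c = p * v * star v * (p * p) * v * star v * p by simp only [c, mul_assoc],
        hp.isIdempotentElem.eq]
      simp only [mul_assoc]
    rw [this]
    exact K.mul_mem_right _ _ (K.mul_mem_right _ _ (K.mul_mem_left _ _ hvpv))
  rw [TwoSidedIdeal.mem_iff_ringCon_mk'_eq_zero] at hpc hcc ⊢
  rw [map_sub, sub_eq_zero] at hpc
  rw [← hp.isIdempotentElem.eq, map_mul, hpc, ← map_mul, hcc]

end IsPartialIsometry

namespace IsExtremalPartialIsometry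

variable {A : Type*} [CStarAlgebra A] {u v : A}

lemma one_sub_mul_star_mem_closedIdealGen (hu : IsExtremalPartialIsometry u)
    (hv : IsExtremalPartialIsometry v) (hd : ‖u - v‖ < 2) :
    1 - u * star u ∈ closedIdealGen (1 - v * star v) := by
  set K := (TwoSidedIdeal.span {1 - v * star v, 1 - star u * u}).topologicalClosure
  have hvK : 1 - v * star v ∈ K :=
    TwoSidedIdeal.le_topologicalClosure _ (TwoSidedIdeal.subset_span (by simp))
  have huK : 1 - star u * u ∈ K :=
    TwoSidedIdeal.le_topologicalClosure _ (TwoSidedIdeal.subset_span (by simp))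
  have hpK : 1 - u * star u ∈ K :=
    hu.1.one_sub_mul_star_mem hv.1 (TwoSidedIdeal.isClosed_topologicalClosure _) hvK
      (hu.1.one_sub_star_mul_mul_star_mul_mem hv.1.norm_le_one hd hvK huK)
  rw [closedIdealGen, ← TwoSidedIdeal.coe_topologicalClosure, SetLike.mem_coe]
  exact TwoSidedIdeal.mem_topologicalClosure_span_singleton_of_mem_span_pair
    hu.1.isStarProjection_mul_star.one_sub.isIdempotentElem
    hu.one_sub_mul_star_mul_mul_one_sub_star_mul hpK

end IsExtremalPartialIsometry

/-- **Corollary 6.** If `u` and `v` are extremal partial isometries in a unital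
C*-algebra with `‖u − v‖ < 2`, then `u` and `v` have the same left defect ideals
and the same right defect ideals. -/
theorem defectIdeals_eq_of_norm_sub_lt_two
    {A : Type*} [CStarAlgebra A] (u v : A)
    (hu : IsExtremalPartialIsometry u) (hv : IsExtremalPartialIsometry v)
    (hd : ‖u - v‖ < 2) :
    closedIdealGen (1 - u * star u) = closedIdealGen (1 - v * star v) ∧
    closedIdealGen (1 - star u * u) = closedIdealGen (1 - star v * v) := by
  have hd' : ‖star u - star v‖ < 2 := by rwa [← star_sub, norm_star]
  have h₁ := hu.star.one_sub_mul_star_mem_closedIdealGen hv.star hd'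
  have h₂ := hv.star.one_sub_mul_star_mem_closedIdealGen hu.star (by rwa [norm_sub_rev])
  simp only [star_star] at h₁ h₂
  exact ⟨(closedIdealGen_subset_of_mem (hu.one_sub_mul_star_mem_closedIdealGen hv hd)).antisymm
      (closedIdealGen_subset_of_mem
        (hv.one_sub_mul_star_mem_closedIdealGen hu (by rwa [norm_sub_rev]))),
    (closedIdealGen_subset_of_mem h₁).antisymm (closedIdealGen_subset_of_mem h₂)⟩
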